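/- arXiv:2504.04859 — 6 statements merged into one kernel-verified Lean document; each statement's English description precedes it below -/
import Mathlib

section
/- Let R : V̂ → V and R_D : V̂ → V be linear maps between finite-dimensional real vector spaces satisfying R_Dᵀ R = Id on V̂. Let S be a symmetric positive definite operator on V, and define Ŝ = Rᵀ S R on V̂ and the preconditioner M⁻¹ = R_Dᵀ S⁻¹ R_D. Then for every p ∈ V̂: ⟨p, p⟩_Ŝ ≤ 2⟨p, M⁻¹ Ŝ p⟩_Ŝ, where ⟨x,y⟩_Ŝ = xᵀ Ŝ y. In particular all eigenvalues of M⁻¹Ŝ (in the Ŝ-inner product) are bounded below by 1/2. -/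
open Matrix

/-- abstract BDDC lower bound. -/
theorem stmt5 {n m : ℕ} (R RD : Matrix (Fin n) (Fin m) ℝ)
    (hRD : RDᵀ * R = 1)
    (S : Matrix (Fin n) (Fin n) ℝ) (hS : S.PosDef) :
    (∀ p : Fin m → ℝ,
      p ⬝ᵥ ((Rᵀ * S * R) *ᵥ p) ≤
        2 * (p ⬝ᵥ (((Rᵀ * S * R) * (RDᵀ * S⁻¹ * RD) * (Rᵀ * S * R)) *ᵥ p))) ∧
      ∀ (μ : ℝ) (p : Fin m → ℝ), p ≠ 0 →
        ((RDᵀ * S⁻¹ * RD) * (Rᵀ * S * R)) *ᵥ p = μ • p → 1 / 2 ≤ μ := by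
  have hSt : Sᵀ = S := hS.1
  have hSinv : S⁻¹.PosDef := hS.inv
  have hSinvT : S⁻¹ᵀ = S⁻¹ := hSinv.1
  have hdet : IsUnit S.det := (Matrix.isUnit_iff_isUnit_det S).mp hS.isUnit
  have hSS : S * S⁻¹ = 1 := Matrix.mul_nonsing_inv S hdet
  have hSS' : S⁻¹ * S = 1 := Matrix.nonsing_inv_mul S hdet
  have hadj : ∀ {k l : ℕ} (A : Matrix (Fin k) (Fin l) ℝ) (x : Fin l → ℝ) (y : Fin k → ℝ),
      (A *ᵥ x) ⬝ᵥ y = x ⬝ᵥ (Aᵀ *ᵥ y) := fun A x y => by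
    rw [dotProduct_comm, Matrix.dotProduct_mulVec, ← Matrix.mulVec_transpose, dotProduct_comm]
  have hadj' : ∀ {k l : ℕ} (A : Matrix (Fin k) (Fin l) ℝ) (x : Fin k → ℝ) (y : Fin l → ℝ),
      x ⬝ᵥ (A *ᵥ y) = (Aᵀ *ᵥ x) ⬝ᵥ y := fun A x y => by
    rw [hadj, transpose_transpose]
  -- symmetry of the S-bilinear form
  have e2 : ∀ x y : Fin n → ℝ, x ⬝ᵥ (S *ᵥ y) = (S *ᵥ x) ⬝ᵥ y := fun x y => by
    rw [hadj' S x y, hSt]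
  have key : ∀ p : Fin m → ℝ,
      p ⬝ᵥ (Rᵀ *ᵥ (S *ᵥ (R *ᵥ p))) ≤
        p ⬝ᵥ (Rᵀ *ᵥ (S *ᵥ (R *ᵥ (RDᵀ *ᵥ (S⁻¹ *ᵥ (RD *ᵥ (Rᵀ *ᵥ (S *ᵥ (R *ᵥ p))))))))) ∧
      0 ≤ p ⬝ᵥ (Rᵀ *ᵥ (S *ᵥ (R *ᵥ (RDᵀ *ᵥ (S⁻¹ *ᵥ (RD *ᵥ (Rᵀ *ᵥ (S *ᵥ (R *ᵥ p))))))))) := by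
    intro p
    -- abbreviate V and W only as local notation in the proof terms below
    have hb : p ⬝ᵥ (Rᵀ *ᵥ (S *ᵥ (R *ᵥ (RDᵀ *ᵥ (S⁻¹ *ᵥ (RD *ᵥ (Rᵀ *ᵥ (S *ᵥ (R *ᵥ p)))))))))
        = (RD *ᵥ (Rᵀ *ᵥ (S *ᵥ (R *ᵥ p)))) ⬝ᵥ
            (S⁻¹ *ᵥ (RD *ᵥ (Rᵀ *ᵥ (S *ᵥ (R *ᵥ p))))) := by
      rw [hadj' Rᵀ, transpose_transpose, e2, hadj' R,
        hadj' RDᵀ, transpose_transpose]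
    have ha : p ⬝ᵥ (Rᵀ *ᵥ (S *ᵥ (R *ᵥ p))) = (R *ᵥ p) ⬝ᵥ (S *ᵥ (R *ᵥ p)) := by
      rw [hadj' Rᵀ, transpose_transpose]
    have hwSw : (S⁻¹ *ᵥ (RD *ᵥ (Rᵀ *ᵥ (S *ᵥ (R *ᵥ p))))) ⬝ᵥ
          (S *ᵥ (S⁻¹ *ᵥ (RD *ᵥ (Rᵀ *ᵥ (S *ᵥ (R *ᵥ p)))))) =
        (RD *ᵥ (Rᵀ *ᵥ (S *ᵥ (R *ᵥ p)))) ⬝ᵥ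
          (S⁻¹ *ᵥ (RD *ᵥ (Rᵀ *ᵥ (S *ᵥ (R *ᵥ p))))) := by
      rw [Matrix.mulVec_mulVec (RD *ᵥ (Rᵀ *ᵥ (S *ᵥ (R *ᵥ p)))) S S⁻¹, hSS,
        Matrix.one_mulVec, dotProduct_comm]
    have hwSRp : (S⁻¹ *ᵥ (RD *ᵥ (Rᵀ *ᵥ (S *ᵥ (R *ᵥ p))))) ⬝ᵥ (S *ᵥ (R *ᵥ p)) =
        p ⬝ᵥ (Rᵀ *ᵥ (S *ᵥ (R *ᵥ p))) := by
      rw [hadj S⁻¹, hSinvT, Matrix.mulVec_mulVec (R *ᵥ p) S⁻¹ S, hSS',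
        Matrix.one_mulVec, hadj RD, Matrix.mulVec_mulVec p RDᵀ R, hRD,
        Matrix.one_mulVec, dotProduct_comm]
    have hnn : 0 ≤ (RD *ᵥ (Rᵀ *ᵥ (S *ᵥ (R *ᵥ p)))) ⬝ᵥ
        (S⁻¹ *ᵥ (RD *ᵥ (Rᵀ *ᵥ (S *ᵥ (R *ᵥ p))))) := hSinv.posSemidef.dotProduct_mulVec_nonneg _
    refine ⟨?_, by rw [hb]; exact hnn⟩
    have h0 : (0:ℝ) ≤ ((S⁻¹ *ᵥ (RD *ᵥ (Rᵀ *ᵥ (S *ᵥ (R *ᵥ p))))) - R *ᵥ p) ⬝ᵥ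
        (S *ᵥ ((S⁻¹ *ᵥ (RD *ᵥ (Rᵀ *ᵥ (S *ᵥ (R *ᵥ p))))) - R *ᵥ p)) := hS.posSemidef.dotProduct_mulVec_nonneg _
    have hsym : (R *ᵥ p) ⬝ᵥ (S *ᵥ (S⁻¹ *ᵥ (RD *ᵥ (Rᵀ *ᵥ (S *ᵥ (R *ᵥ p)))))) =
        (S⁻¹ *ᵥ (RD *ᵥ (Rᵀ *ᵥ (S *ᵥ (R *ᵥ p))))) ⬝ᵥ (S *ᵥ (R *ᵥ p)) := by
      rw [e2, dotProduct_comm]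
    rw [Matrix.mulVec_sub, sub_dotProduct, dotProduct_sub,
      dotProduct_sub, hwSw, hsym, hwSRp, ← ha] at h0
    rw [hb]
    linarith
  constructor
  · intro p
    obtain ⟨h1, h2⟩ := key p
    simp only [← Matrix.mulVec_mulVec]
    linarith
  · intro μ p hp heig
    obtain ⟨h1, _⟩ := key p
    have heig' : RDᵀ *ᵥ (S⁻¹ *ᵥ (RD *ᵥ (Rᵀ *ᵥ (S *ᵥ (R *ᵥ p))))) = μ • p := by
      simp only [← Matrix.mulVec_mulVec] at heig
      exact heig
    have hb' : p ⬝ᵥ (Rᵀ *ᵥ (S *ᵥ (R *ᵥ (RDᵀ *ᵥ (S⁻¹ *ᵥ (RD *ᵥ (Rᵀ *ᵥ (S *ᵥ (R *ᵥ p)))))))))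
        = μ * (p ⬝ᵥ (Rᵀ *ᵥ (S *ᵥ (R *ᵥ p)))) := by
      rw [heig', Matrix.mulVec_smul, Matrix.mulVec_smul, Matrix.mulVec_smul,
        dotProduct_smul, smul_eq_mul]
    have hRinj : R *ᵥ p ≠ 0 := by
      intro h0
      apply hp
      have h2 : (RDᵀ * R) *ᵥ p = 0 := by
        rw [← Matrix.mulVec_mulVec, h0, Matrix.mulVec_zero]
      rwa [hRD, Matrix.one_mulVec] at h2
    have hapos : 0 < p ⬝ᵥ (Rᵀ *ᵥ (S *ᵥ (R *ᵥ p))) := by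
      have h3 := hS.dotProduct_mulVec_pos hRinj
      rw [hadj' Rᵀ, transpose_transpose]
      simpa using h3
    rw [hb'] at h1
    nlinarith
end

section
/- Let R, R_D : V̂ → V be linear with R_Dᵀ R = Rᵀ R_D = Id, S symmetric positive definite on V, Ŝ = Rᵀ S R, M⁻¹ = R_Dᵀ S⁻¹ R_D. Suppose the averaging operator E_D = R R_Dᵀ satisfies the stability bound ‖E_D v‖_S ≤ Λ ‖v‖_S for all v ∈ V. Then for every p ∈ V̂: ⟨p, M⁻¹ Ŝ p⟩_Ŝ ≤ Λ² ⟨p, p⟩_Ŝ. -/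
open Matrix

theorem quadForm_eq' {k n : ℕ} (M : Matrix (Fin n) (Fin n) ℝ) (N : Matrix (Fin n) (Fin k) ℝ)
    (p : Fin k → ℝ) :
    (N *ᵥ p) ⬝ᵥ (M *ᵥ (N *ᵥ p)) = p ⬝ᵥ ((Nᵀ * M * N) *ᵥ p) := by
  rw [mulVec_mulVec, dotProduct_mulVec, dotProduct_mulVec]
  congr 1
  rw [← mulVec_transpose, ← mulVec_transpose, mulVec_mulVec]
  simp [transpose_mul, Matrix.mul_assoc]

theorem cs_psd' {n : ℕ} {A : Matrix (Fin n) (Fin n) ℝ} (hA : A.PosSemidef) (x y : Fin n → ℝ) :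
    (x ⬝ᵥ (A *ᵥ y))^2 ≤ (x ⬝ᵥ (A *ᵥ x)) * (y ⬝ᵥ (A *ᵥ y)) := by
  obtain ⟨B, hB, rfl⟩ : ∃ B : Matrix (Fin n) (Fin n) ℝ, Bᵀ = B ∧ B * B = A :=
    open scoped MatrixOrder in
    ⟨CFC.sqrt A, (conjTranspose_eq_transpose_of_trivial _).symm.trans
      (Matrix.nonneg_iff_posSemidef.mp (CFC.sqrt_nonneg A)).isHermitian.eq,
      CFC.sqrt_mul_sqrt_self A hA.nonneg⟩
  have key : ∀ u v : Fin n → ℝ, u ⬝ᵥ ((B * B) *ᵥ v) = (B *ᵥ u) ⬝ᵥ (B *ᵥ v) := by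
    intro u v
    rw [← mulVec_mulVec, dotProduct_mulVec u B]
    congr 1
    rw [← mulVec_transpose, hB]
  rw [key x y, key x x, key y y]
  have := Finset.sum_mul_sq_le_sq_mul_sq Finset.univ (B *ᵥ x) (B *ᵥ y)
  simpa [dotProduct, pow_two, mul_pow] using this

/-- abstract BDDC upper bound from stability of the averaging operator. -/
theorem stmt6 {n m : ℕ} (R RD : Matrix (Fin n) (Fin m) ℝ)
    (hRD : RDᵀ * R = 1) (hRD' : Rᵀ * RD = 1)
    (S : Matrix (Fin n) (Fin n) ℝ) (hS : S.PosDef) (Λ : ℝ)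
    (hED : ∀ v : Fin n → ℝ,
      Real.sqrt (((R * RDᵀ) *ᵥ v) ⬝ᵥ (S *ᵥ ((R * RDᵀ) *ᵥ v))) ≤
        Λ * Real.sqrt (v ⬝ᵥ (S *ᵥ v))) :
    ∀ p : Fin m → ℝ,
      p ⬝ᵥ (((Rᵀ * S * R) * (RDᵀ * S⁻¹ * RD) * (Rᵀ * S * R)) *ᵥ p) ≤
        Λ ^ 2 * (p ⬝ᵥ ((Rᵀ * S * R) *ᵥ p)) := by
  intro p
  have hSsym : Sᵀ = S := by
    simpa [conjTranspose_eq_transpose_of_trivial] using hS.isHermitian.eq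
  have hSinv_sym : S⁻¹ᵀ = S⁻¹ := by rw [transpose_nonsing_inv, hSsym]
  have hdet : IsUnit S.det := hS.det_pos.ne'.isUnit
  have hmulinv : S * S⁻¹ = 1 := mul_nonsing_inv S hdet
  set Sh : Matrix (Fin m) (Fin m) ℝ := Rᵀ * S * R with hSh
  have hShsym : Shᵀ = Sh := by
    rw [hSh, transpose_mul, transpose_mul, transpose_transpose, hSsym, Matrix.mul_assoc]
  -- positive semidefiniteness of Sh
  have hShPSD : Sh.PosSemidef := by
    have := hS.posSemidef.conjTranspose_mul_mul_same R
    simpa [conjTranspose_eq_transpose_of_trivial, hSh, Matrix.mul_assoc] using this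
  have hquadSh : ∀ x : Fin m → ℝ, 0 ≤ x ⬝ᵥ (Sh *ᵥ x) := by
    intro x
    simpa using hShPSD.re_dotProduct_nonneg x
  -- the auxiliary vectors
  set w : Fin n → ℝ := (S⁻¹ * RD * Sh) *ᵥ p with hw
  set q : Fin m → ℝ := (RDᵀ * S⁻¹ * RD * Sh) *ᵥ p with hq
  -- L in terms of w
  have hMat : (S⁻¹ * RD * Sh)ᵀ * S * (S⁻¹ * RD * Sh) = Sh * (RDᵀ * S⁻¹ * RD) * Sh := by
    rw [transpose_mul, hShsym, transpose_mul, hSinv_sym]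
    simp only [Matrix.mul_assoc]
    rw [← Matrix.mul_assoc S S⁻¹, hmulinv, Matrix.one_mul]
  have hL : p ⬝ᵥ ((Sh * (RDᵀ * S⁻¹ * RD) * Sh) *ᵥ p) = w ⬝ᵥ (S *ᵥ w) := by
    rw [hw, quadForm_eq' S (S⁻¹ * RD * Sh) p, hMat]
  -- E_D w = R q
  have hEDw : (R * RDᵀ) *ᵥ w = R *ᵥ q := by
    rw [hw, hq, mulVec_mulVec, mulVec_mulVec]
    congr 1
    simp only [Matrix.mul_assoc]
  -- apply stability to w
  have hstab := hED w
  rw [hEDw, quadForm_eq' S R q, ← hSh, ← hL] at hstab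
  set L : ℝ := p ⬝ᵥ ((Sh * (RDᵀ * S⁻¹ * RD) * Sh) *ᵥ p) with hLdef
  set a : ℝ := p ⬝ᵥ (Sh *ᵥ p) with ha
  set c : ℝ := q ⬝ᵥ (Sh *ᵥ q) with hc
  have hLnonneg : 0 ≤ L := by
    rw [hL]
    simpa using hS.posSemidef.re_dotProduct_nonneg w
  have hanonneg : 0 ≤ a := hquadSh p
  have hcnonneg : 0 ≤ c := hquadSh q
  -- L = p ⬝ᵥ Sh q
  have hLq : L = p ⬝ᵥ (Sh *ᵥ q) := by
    rw [hLdef, hq, mulVec_mulVec]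
    congr 2
    simp only [Matrix.mul_assoc]
  -- c ≤ Λ² L
  have hcL : c ≤ Λ ^ 2 * L := by
    have h1 : Real.sqrt c ≤ Λ * Real.sqrt L := hstab
    have h2 : (Real.sqrt c) ^ 2 ≤ (Λ * Real.sqrt L) ^ 2 :=
      pow_le_pow_left₀ (Real.sqrt_nonneg c) h1 2
    calc c = (Real.sqrt c) ^ 2 := (Real.sq_sqrt hcnonneg).symm
      _ ≤ (Λ * Real.sqrt L) ^ 2 := h2
      _ = Λ ^ 2 * L := by rw [mul_pow, Real.sq_sqrt hLnonneg]
  -- Cauchy–Schwarz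
  have hCS : L ^ 2 ≤ a * c := by
    rw [hLq]
    exact cs_psd' hShPSD p q
  -- conclude
  rcases eq_or_lt_of_le hLnonneg with hL0 | hLpos
  · rw [← hL0]
    positivity
  · have : L * L ≤ (Λ ^ 2 * a) * L := by
      calc L * L = L ^ 2 := (sq L).symm
        _ ≤ a * c := hCS
        _ ≤ a * (Λ ^ 2 * L) := by
            exact mul_le_mul_of_nonneg_left hcL hanonneg
        _ = (Λ ^ 2 * a) * L := by ring
    exact le_of_mul_le_mul_right this hLpos
end

section
/- Under the hypotheses of the previous two results (R_Dᵀ R = Rᵀ R_D = Id, S SPD, Ŝ = Rᵀ S R, M⁻¹ = R_Dᵀ S⁻¹ R_D, and ‖R R_Dᵀ v‖_S ≤ Λ‖v‖_S for all v), the spectral condition number of the preconditioned operator M⁻¹Ŝ satisfies cond(M⁻¹Ŝ) ≤ 2Λ². -/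
open Matrix

lemma symm_dot {k : ℕ} {A : Matrix (Fin k) (Fin k) ℝ} (hA : A.IsHermitian)
    (x y : Fin k → ℝ) : x ⬝ᵥ (A *ᵥ y) = y ⬝ᵥ (A *ᵥ x) := by
  have hAt : Aᵀ = A := by
    have := hA.eq
    simpa [Matrix.conjTranspose_eq_transpose_of_trivial] using this
  rw [dotProduct_mulVec, ← mulVec_transpose, hAt, dotProduct_comm]

lemma cs_real {k : ℕ} {A : Matrix (Fin k) (Fin k) ℝ} (hA : A.PosSemidef)
    (x y : Fin k → ℝ) :
    (x ⬝ᵥ (A *ᵥ y))^2 ≤ (x ⬝ᵥ (A *ᵥ x)) * (y ⬝ᵥ (A *ᵥ y)) := by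
  have hq : ∀ t : ℝ, 0 ≤ (y ⬝ᵥ (A *ᵥ y)) * (t * t) + (2 * (x ⬝ᵥ (A *ᵥ y))) * t
      + (x ⬝ᵥ (A *ᵥ x)) := by
    intro t
    have h0 := hA.dotProduct_mulVec_nonneg (x + t • y)
    have hst : star (x + t • y) = x + t • y := star_trivial _
    rw [hst] at h0
    have hsym := symm_dot hA.1 y x
    have hexp : (x + t • y) ⬝ᵥ (A *ᵥ (x + t • y)) =
        (y ⬝ᵥ (A *ᵥ y)) * (t * t) + (2 * (x ⬝ᵥ (A *ᵥ y))) * t + (x ⬝ᵥ (A *ᵥ x)) := by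
      simp [mulVec_add, mulVec_smul, dotProduct_add, add_dotProduct,
        smul_dotProduct, dotProduct_smul, smul_eq_mul, hsym]
      ring
    rw [hexp] at h0
    exact h0
  have hd := discrim_le_zero hq
  rw [discrim] at hd
  nlinarith [hd]

/-- the preconditioned BDDC operator has condition number at most `2Λ²`:
the ratio of any two eigenvalues of `M⁻¹Ŝ` is bounded by `2Λ²`. -/
theorem stmt7 {n m : ℕ} (R RD : Matrix (Fin n) (Fin m) ℝ)
    (hRD : RDᵀ * R = 1) (hRD' : Rᵀ * RD = 1)
    (S : Matrix (Fin n) (Fin n) ℝ) (hS : S.PosDef) (Λ : ℝ)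
    (hED : ∀ v : Fin n → ℝ,
      Real.sqrt (((R * RDᵀ) *ᵥ v) ⬝ᵥ (S *ᵥ ((R * RDᵀ) *ᵥ v))) ≤
        Λ * Real.sqrt (v ⬝ᵥ (S *ᵥ v))) :
    ∀ (μ₁ μ₂ : ℝ) (p₁ p₂ : Fin m → ℝ), p₁ ≠ 0 → p₂ ≠ 0 →
      ((RDᵀ * S⁻¹ * RD) * (Rᵀ * S * R)) *ᵥ p₁ = μ₁ • p₁ →
      ((RDᵀ * S⁻¹ * RD) * (Rᵀ * S * R)) *ᵥ p₂ = μ₂ • p₂ →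
      μ₁ ≤ 2 * Λ ^ 2 * μ₂ := by
  intro μ₁ μ₂ p₁ p₂ hp₁ hp₂ he₁ he₂
  have hSS : S * S⁻¹ = 1 := Matrix.mul_nonsing_inv S hS.det_pos.ne'.isUnit
  have hSpos : ∀ v : Fin n → ℝ, v ≠ 0 → 0 < v ⬝ᵥ (S *ᵥ v) := by
    intro v hv
    have := hS.dotProduct_mulVec_pos hv
    rwa [star_trivial] at this
  -- R has full column rank
  have hRinj : ∀ p : Fin m → ℝ, p ≠ 0 → R *ᵥ p ≠ 0 := by
    intro p hp hc
    apply hp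
    have h1 : RDᵀ *ᵥ (R *ᵥ p) = p := by
      rw [mulVec_mulVec, hRD, one_mulVec]
    rw [hc, mulVec_zero] at h1
    exact h1.symm
  -- shifting transposes across dotProduct
  have hshiftR : ∀ (x : Fin m → ℝ) (y : Fin n → ℝ),
      x ⬝ᵥ (Rᵀ *ᵥ y) = (R *ᵥ x) ⬝ᵥ y := by
    intro x y
    rw [dotProduct_mulVec, ← mulVec_transpose, transpose_transpose]
  have hshiftRD : ∀ (x : Fin m → ℝ) (y : Fin n → ℝ),
      x ⬝ᵥ (RDᵀ *ᵥ y) = (RD *ᵥ x) ⬝ᵥ y := by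
    intro x y
    rw [dotProduct_mulVec, ← mulVec_transpose, transpose_transpose]
  -- Λ ≥ 1
  have hΛ : 1 ≤ Λ := by
    have hv : R *ᵥ p₁ ≠ 0 := hRinj p₁ hp₁
    have h1 : RDᵀ *ᵥ (R *ᵥ p₁) = p₁ := by
      rw [mulVec_mulVec, hRD, one_mulVec]
    have hfix : (R * RDᵀ) *ᵥ (R *ᵥ p₁) = R *ᵥ p₁ := by
      rw [← mulVec_mulVec, h1]
    have h := hED (R *ᵥ p₁)
    rw [hfix] at h
    have hpos : 0 < Real.sqrt ((R *ᵥ p₁) ⬝ᵥ (S *ᵥ (R *ᵥ p₁))) :=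
      Real.sqrt_pos.mpr (hSpos _ hv)
    nlinarith [h, hpos]
  -- key claim: every eigenvalue lies in [1, Λ²]
  have key : ∀ (μ : ℝ) (p : Fin m → ℝ), p ≠ 0 →
      ((RDᵀ * S⁻¹ * RD) * (Rᵀ * S * R)) *ᵥ p = μ • p → 1 ≤ μ ∧ μ ≤ Λ ^ 2 := by
    intro μ p hp he
    set u : Fin n → ℝ := S *ᵥ (R *ᵥ p) with hu
    set q : Fin n → ℝ := RD *ᵥ (Rᵀ *ᵥ u) with hq
    set w : Fin n → ℝ := S⁻¹ *ᵥ q with hwdef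
    set a : ℝ := (R *ᵥ p) ⬝ᵥ u with ha
    set b : ℝ := q ⬝ᵥ w with hb
    have ha_pos : 0 < a := hSpos _ (hRinj p hp)
    -- Shat *ᵥ p = Rᵀ *ᵥ u
    have hShat : (Rᵀ * S * R) *ᵥ p = Rᵀ *ᵥ u := by
      rw [← mulVec_mulVec, ← mulVec_mulVec]
    -- b = μ * a : dot the eigen-equation with Rᵀ *ᵥ u
    have hba : b = μ * a := by
      have h1 : (Rᵀ *ᵥ u) ⬝ᵥ (((RDᵀ * S⁻¹ * RD) * (Rᵀ * S * R)) *ᵥ p)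
          = (Rᵀ *ᵥ u) ⬝ᵥ (μ • p) := by rw [he]
      have hL : (Rᵀ *ᵥ u) ⬝ᵥ (((RDᵀ * S⁻¹ * RD) * (Rᵀ * S * R)) *ᵥ p) = b := by
        rw [← mulVec_mulVec, hShat, ← mulVec_mulVec, ← mulVec_mulVec]
        exact hshiftRD _ _
      have hR : (Rᵀ *ᵥ u) ⬝ᵥ (μ • p) = μ * a := by
        rw [dotProduct_smul, smul_eq_mul]
        congr 1
        rw [dotProduct_comm, hshiftR]
      rw [hL, hR] at h1
      exact h1
    -- a = (R *ᵥ p) ⬝ᵥ q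
    have hRtq : Rᵀ *ᵥ q = Rᵀ *ᵥ u := by
      rw [hq, mulVec_mulVec, hRD', one_mulVec]
    have haq : a = (R *ᵥ p) ⬝ᵥ q := by
      rw [ha, ← hshiftR, ← hRtq, hshiftR]
    -- S *ᵥ w = q
    have hSq : S *ᵥ w = q := by
      rw [hwdef, mulVec_mulVec, hSS, one_mulVec]
    have hwSw : w ⬝ᵥ (S *ᵥ w) = b := by
      rw [hSq]; exact dotProduct_comm _ _
    -- lower bound: a ≤ b
    have hab : a ≤ b := by
      have hcs := cs_real hS.posSemidef (R *ᵥ p) w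
      have e1 : (R *ᵥ p) ⬝ᵥ (S *ᵥ w) = (R *ᵥ p) ⬝ᵥ q := by rw [hSq]
      have e2 : (R *ᵥ p) ⬝ᵥ (S *ᵥ (R *ᵥ p)) = a := rfl
      rw [e1, ← haq, e2, hwSw] at hcs
      nlinarith [hcs, ha_pos]
    have hμ1 : 1 ≤ μ := by nlinarith [hab, hba, ha_pos]
    have hb_pos : 0 < b := by nlinarith [hba, ha_pos, hμ1]
    -- upper bound: b ≤ Λ² * a
    have hbu : b ≤ Λ ^ 2 * a := by
      have hbval : b = (R *ᵥ p) ⬝ᵥ (S *ᵥ ((R * RDᵀ) *ᵥ w)) := by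
        calc b = (Rᵀ *ᵥ u) ⬝ᵥ (RDᵀ *ᵥ w) := (hshiftRD _ _).symm
          _ = (RDᵀ *ᵥ w) ⬝ᵥ (Rᵀ *ᵥ u) := dotProduct_comm _ _
          _ = (R *ᵥ (RDᵀ *ᵥ w)) ⬝ᵥ u := hshiftR _ _
          _ = ((R * RDᵀ) *ᵥ w) ⬝ᵥ u := by rw [mulVec_mulVec]
          _ = ((R * RDᵀ) *ᵥ w) ⬝ᵥ (S *ᵥ (R *ᵥ p)) := rfl
          _ = (R *ᵥ p) ⬝ᵥ (S *ᵥ ((R * RDᵀ) *ᵥ w)) := symm_dot hS.1 _ _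
      have hE := hED w
      have hE2 : ((R * RDᵀ) *ᵥ w) ⬝ᵥ (S *ᵥ ((R * RDᵀ) *ᵥ w)) ≤ Λ ^ 2 * b := by
        have hnn : 0 ≤ ((R * RDᵀ) *ᵥ w) ⬝ᵥ (S *ᵥ ((R * RDᵀ) *ᵥ w)) := by
          have := hS.posSemidef.dotProduct_mulVec_nonneg ((R * RDᵀ) *ᵥ w)
          rwa [star_trivial] at this
        have h1 : Real.sqrt (((R * RDᵀ) *ᵥ w) ⬝ᵥ (S *ᵥ ((R * RDᵀ) *ᵥ w)))
            ≤ Λ * Real.sqrt b := by rw [← hwSw]; exact hE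
        have h2 := Real.sq_sqrt hnn
        have h3 := Real.sq_sqrt hb_pos.le
        have h4 := Real.sqrt_nonneg
          (((R * RDᵀ) *ᵥ w) ⬝ᵥ (S *ᵥ ((R * RDᵀ) *ᵥ w)))
        nlinarith [h1, h2, h3, h4]
      have hcs := cs_real hS.posSemidef (R *ᵥ p) ((R * RDᵀ) *ᵥ w)
      have e2 : (R *ᵥ p) ⬝ᵥ (S *ᵥ (R *ᵥ p)) = a := rfl
      rw [← hbval, e2] at hcs
      nlinarith [hcs, hE2, hb_pos, ha_pos]
    have hμ2 : μ ≤ Λ ^ 2 := by nlinarith [hbu, hba, ha_pos]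
    exact ⟨hμ1, hμ2⟩
  obtain ⟨h11, h12⟩ := key μ₁ p₁ hp₁ he₁
  obtain ⟨h21, h22⟩ := key μ₂ p₂ hp₂ he₂
  nlinarith [h12, h21, hΛ]
end

section
/- Let K = [[A, Bᵀ, 0],[B, −C, Dᵀ],[0, D, −E]] be the three-field Biot matrix with A SPD and the block [[C, −Dᵀ],[−D, E]] positive definite. Then K is invertible. -/
open Matrix

lemma dot_transpose_swap {a b : ℕ} (M : Matrix (Fin a) (Fin b) ℝ)
    (x : Fin b → ℝ) (y : Fin a → ℝ) : x ⬝ᵥ (Mᵀ *ᵥ y) = y ⬝ᵥ (M *ᵥ x) := by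
  rw [Matrix.dotProduct_mulVec, Matrix.vecMul_transpose, dotProduct_comm]

/-- invertibility of the three-field Biot matrix. -/
theorem stmt9 {n m k : ℕ}
    (A : Matrix (Fin n) (Fin n) ℝ) (B : Matrix (Fin m) (Fin n) ℝ)
    (C : Matrix (Fin m) (Fin m) ℝ) (D : Matrix (Fin k) (Fin m) ℝ)
    (E : Matrix (Fin k) (Fin k) ℝ)
    (hA : A.PosDef) (hC : C.IsSymm) (hE : E.IsSymm)
    (hCE : ∀ (η : Fin m → ℝ) (q : Fin k → ℝ), (η, q) ≠ 0 →
      0 < η ⬝ᵥ (C *ᵥ η) - 2 * (q ⬝ᵥ (D *ᵥ η)) + q ⬝ᵥ (E *ᵥ q)) :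
    IsUnit (Matrix.fromBlocks A (Matrix.fromCols Bᵀ 0)
      (Matrix.fromRows B 0) (Matrix.fromBlocks (-C) Dᵀ D (-E))) := by
  rw [Matrix.isUnit_iff_isUnit_det, isUnit_iff_ne_zero]
  intro hdet
  obtain ⟨v, hv, hKv⟩ := Matrix.exists_mulVec_eq_zero_iff.mpr hdet
  set u : Fin n → ℝ := v ∘ Sum.inl with hu
  set η : Fin m → ℝ := fun i => v (Sum.inr (Sum.inl i)) with hη
  set q : Fin k → ℝ := fun i => v (Sum.inr (Sum.inr i)) with hq
  have e1 : A *ᵥ u + Bᵀ *ᵥ η = 0 := by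
    funext i
    have h := congrFun hKv (Sum.inl i)
    simp [Matrix.mulVec, Matrix.fromBlocks, Matrix.fromCols, dotProduct,
      Fintype.sum_sum_type, Matrix.mulVec] at h ⊢
    convert h using 2 <;> simp [hu, hη, hq]
  have e2 : B *ᵥ u - C *ᵥ η + Dᵀ *ᵥ q = 0 := by
    funext i
    have h := congrFun hKv (Sum.inr (Sum.inl i))
    simp only [Matrix.mulVec, Matrix.fromBlocks, Matrix.fromRows_apply_inl, Matrix.fromRows_apply_inr, dotProduct,
      Fintype.sum_sum_type, Matrix.of_apply, Sum.elim_inl, Sum.elim_inr, Matrix.neg_apply,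
      Matrix.transpose_apply, Pi.zero_apply, Pi.add_apply, Pi.sub_apply, Function.comp_apply,
      hu, hη, hq, neg_mul, Finset.sum_neg_distrib, Matrix.zero_apply, zero_mul,
      Finset.sum_const_zero, zero_add] at h ⊢
    linarith
  have e3 : D *ᵥ η - E *ᵥ q = 0 := by
    funext i
    have h := congrFun hKv (Sum.inr (Sum.inr i))
    simp only [Matrix.mulVec, Matrix.fromBlocks, Matrix.fromRows_apply_inl, Matrix.fromRows_apply_inr, dotProduct,
      Fintype.sum_sum_type, Matrix.of_apply, Sum.elim_inl, Sum.elim_inr, Matrix.neg_apply,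
      Matrix.transpose_apply, Pi.zero_apply, Pi.add_apply, Pi.sub_apply, Function.comp_apply,
      hu, hη, hq, neg_mul, Finset.sum_neg_distrib, Matrix.zero_apply, zero_mul,
      Finset.sum_const_zero, zero_add] at h ⊢
    linarith
  have s1 : u ⬝ᵥ (A *ᵥ u) + u ⬝ᵥ (Bᵀ *ᵥ η) = 0 := by
    have := congrArg (fun x => u ⬝ᵥ x) e1
    simpa [dotProduct_add] using this
  have s2 : η ⬝ᵥ (B *ᵥ u) - η ⬝ᵥ (C *ᵥ η) + η ⬝ᵥ (Dᵀ *ᵥ q) = 0 := by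
    have := congrArg (fun x => η ⬝ᵥ x) e2
    simpa [dotProduct_add, dotProduct_sub] using this
  have s3 : q ⬝ᵥ (D *ᵥ η) - q ⬝ᵥ (E *ᵥ q) = 0 := by
    have := congrArg (fun x => q ⬝ᵥ x) e3
    simpa [dotProduct_sub] using this
  have sym1 : u ⬝ᵥ (Bᵀ *ᵥ η) = η ⬝ᵥ (B *ᵥ u) := dot_transpose_swap B u η
  have sym2 : η ⬝ᵥ (Dᵀ *ᵥ q) = q ⬝ᵥ (D *ᵥ η) := dot_transpose_swap D η q
  have key : u ⬝ᵥ (A *ᵥ u) + (η ⬝ᵥ (C *ᵥ η) - 2 * (q ⬝ᵥ (D *ᵥ η)) + q ⬝ᵥ (E *ᵥ q)) = 0 := by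
    linarith [s1, s2, s3, sym1, sym2]
  by_cases hηq : (η, q) = 0
  · have hη0 : η = 0 := congrArg Prod.fst hηq
    have hq0 : q = 0 := congrArg Prod.snd hηq
    have hu0 : u = 0 := by
      by_contra h
      have := hA.dotProduct_mulVec_pos h
      rw [star_trivial] at this
      rw [hη0, hq0] at key
      simp [dotProduct_comm] at key
      -- key : u ⬝ᵥ (A *ᵥ u) = 0
      nlinarith [this, key]
    apply hv
    funext i
    cases i with
    | inl i => exact congrFun hu0 i
    | inr j =>
      cases j with
      | inl j => exact congrFun hη0 j
      | inr j => exact congrFun hq0 j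
  · have hpos := hCE η q hηq
    have hA0 : 0 ≤ u ⬝ᵥ (A *ᵥ u) := by
      have := hA.posSemidef.dotProduct_mulVec_nonneg u; rwa [star_trivial] at this
    linarith
end

section
/- Let B_Δ be a matrix each of whose rows has exactly two nonzero entries, equal to 1 and −1, located in positions belonging to two distinct subdomain blocks, and let B_{Δ,D} be the scaled matrix obtained by multiplying each nonzero entry of B_Δ by a nonnegative weight δ_i†(x) such that for each interface node x the weights over all subdomains sharing x sum to 1 (partition of unity). If each row of B_Δ corresponds to a node shared by exactly two subdomains with weights δ₁ + δ₂ = 1, then B_Δ B_{Δ,D}ᵀ acts as the identity on the range of B_Δ restricted to jump vectors: B_Δ B_{Δ,D}ᵀ g = g for all g in the range of B_Δ. -/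
/-!
Each row of `B_Δ` is `e_j - e_k` and the matching row of `B_{Δ,D}` is `δ₁ e_j - δ₂ e_k`, so their
dot product is `δ₁ + δ₂ = 1`. Distinct rows of `B_Δ` have disjoint supports, and each row of
`B_{Δ,D}` is supported inside the corresponding row of `B_Δ`, so all other row products vanish.
Hence `B_Δ B_{Δ,D}ᵀ = 1`.
-/

open Matrix

namespace Matrix

variable {m n R : Type*} [Fintype n]

theorem dotProduct_eq_zero_of_forall_eq_zero_or_eq_zero [NonUnitalNonAssocSemiring R]
    {v w : n → R} (h : ∀ l, v l = 0 ∨ w l = 0) : v ⬝ᵥ w = 0 :=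
  Finset.sum_eq_zero fun l _ => by rcases h l with h | h <;> simp [h]

theorem dotProduct_eq_add_of_eq_zero_of_ne_of_ne [NonUnitalNonAssocSemiring R]
    {v w : n → R} {j k : n} (hjk : j ≠ k) (hv : ∀ l, l ≠ j → l ≠ k → v l = 0) :
    v ⬝ᵥ w = v j * w j + v k * w k :=
  Fintype.sum_eq_add j k hjk fun l hl => by simp [hv l hl.1 hl.2]

theorem mul_transpose_eq_one_of_dotProduct [DecidableEq m] [NonAssocSemiring R]
    {A C : Matrix m n R} (hdiag : ∀ i, A i ⬝ᵥ C i = 1)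
    (hoff : ∀ i i', i ≠ i' → A i ⬝ᵥ C i' = 0) : A * Cᵀ = 1 := by
  ext i i'
  by_cases h : i = i'
  · subst h
    exact (hdiag i).trans (one_apply_eq i).symm
  · exact (hoff i i' h).trans (one_apply_ne h).symm

end Matrix

/-- the scaled jump operator satisfies `B_Δ B_{Δ,D}ᵀ g = g` on the
range of `B_Δ` (partition-of-unity property of the FETI-DP scaling). -/
theorem stmt10 {r n : ℕ} (B BD : Matrix (Fin r) (Fin n) ℝ)
    (hrow : ∀ i : Fin r, ∃ j k : Fin n, j ≠ k ∧
      B i j = 1 ∧ B i k = -1 ∧ (∀ l, l ≠ j → l ≠ k → B i l = 0) ∧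
      ∃ δ₁ δ₂ : ℝ, 0 ≤ δ₁ ∧ 0 ≤ δ₂ ∧ δ₁ + δ₂ = 1 ∧
        BD i j = δ₁ ∧ BD i k = -δ₂ ∧ (∀ l, l ≠ j → l ≠ k → BD i l = 0))
    (hdisj : ∀ i i' : Fin r, i ≠ i' → ∀ j, B i j = 0 ∨ B i' j = 0) :
    ∀ x : Fin n → ℝ, (B * BDᵀ) *ᵥ (B *ᵥ x) = B *ᵥ x := by
  have hsupport : ∀ i l, B i l = 0 → BD i l = 0 := by
    intro i l hl
    obtain ⟨j, k, -, hBj, hBk, -, -, -, -, -, -, -, -, hD0⟩ := hrow i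
    exact hD0 l (by rintro rfl; simp [hBj] at hl) (by rintro rfl; simp [hBk] at hl)
  have hdiag : ∀ i, B i ⬝ᵥ BD i = 1 := by
    intro i
    obtain ⟨j, k, hjk, hBj, hBk, hB0, δ₁, δ₂, -, -, hsum, hDj, hDk, -⟩ := hrow i
    rw [dotProduct_eq_add_of_eq_zero_of_ne_of_ne hjk hB0, hBj, hBk, hDj, hDk]
    linarith
  have hoff : ∀ i i', i ≠ i' → B i ⬝ᵥ BD i' = 0 := fun i i' h =>
    dotProduct_eq_zero_of_forall_eq_zero_or_eq_zero fun l =>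
      (hdisj i i' h l).imp_right (hsupport i' l)
  intro x
  rw [mul_transpose_eq_one_of_dotProduct hdiag hoff, one_mulVec]
end

section
/- For positive definite symmetric matrices C and E and any matrix D satisfying (qᵀDη)² ≤ (ηᵀCη)(qᵀEq)/2 for all η, q, the following holds: for all (ξ,p) and (η,q), (ξᵀCη − ξᵀDᵀq − pᵀDη + pᵀEq)² ≤ c (ξᵀCξ + pᵀEp)(ηᵀCη + qᵀEq) with c = 9/2. -/
open Matrix

lemma psd_cs {k : ℕ} {M : Matrix (Fin k) (Fin k) ℝ} (hM : M.PosSemidef)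
    (x y : Fin k → ℝ) :
    (x ⬝ᵥ (M *ᵥ y)) ^ 2 ≤ (x ⬝ᵥ (M *ᵥ x)) * (y ⬝ᵥ (M *ᵥ y)) := by
  have hT : Mᵀ = M := by
    have := hM.1.eq
    simpa [Matrix.conjTranspose_eq_transpose_of_trivial] using this
  have hsym : ∀ u v : Fin k → ℝ, u ⬝ᵥ (M *ᵥ v) = v ⬝ᵥ (M *ᵥ u) := by
    intro u v
    rw [dotProduct_mulVec, ← hT, vecMul_transpose, hT, dotProduct_comm]
  have key : ∀ t : ℝ, 0 ≤ (y ⬝ᵥ (M *ᵥ y)) * (t * t) + (2 * (x ⬝ᵥ (M *ᵥ y))) * t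
      + (x ⬝ᵥ (M *ᵥ x)) := by
    intro t
    have h := hM.dotProduct_mulVec_nonneg (x + t • y)
    simp only [star_trivial, mulVec_add, mulVec_smul, dotProduct_add, add_dotProduct,
      smul_dotProduct, dotProduct_smul, smul_eq_mul] at h
    rw [hsym y x] at h
    linarith
  have hd := discrim_le_zero key
  unfold discrim at hd
  nlinarith [hd]

/-- Cauchy–Schwarz bound (5.38) for the bilinear form of the block
matrix `[[C, −Dᵀ],[−D, E]]`, with constant `c = 9/2`. -/
theorem stmt18 {n m : ℕ}
    (C : Matrix (Fin n) (Fin n) ℝ) (E : Matrix (Fin m) (Fin m) ℝ)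
    (D : Matrix (Fin m) (Fin n) ℝ) (hC : C.PosDef) (hE : E.PosDef)
    (hD : ∀ (η : Fin n → ℝ) (q : Fin m → ℝ),
      (q ⬝ᵥ (D *ᵥ η)) ^ 2 ≤ (η ⬝ᵥ (C *ᵥ η)) * (q ⬝ᵥ (E *ᵥ q)) / 2) :
    ∀ (ξ η : Fin n → ℝ) (p q : Fin m → ℝ),
      (ξ ⬝ᵥ (C *ᵥ η) - ξ ⬝ᵥ (Dᵀ *ᵥ q) - p ⬝ᵥ (D *ᵥ η) + p ⬝ᵥ (E *ᵥ q)) ^ 2 ≤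
        9 / 2 * ((ξ ⬝ᵥ (C *ᵥ ξ) + p ⬝ᵥ (E *ᵥ p)) *
          (η ⬝ᵥ (C *ᵥ η) + q ⬝ᵥ (E *ᵥ q))) := by
  intro ξ η p q
  have hrw : ξ ⬝ᵥ (Dᵀ *ᵥ q) = q ⬝ᵥ (D *ᵥ ξ) := by
    rw [dotProduct_mulVec, vecMul_transpose, dotProduct_comm]
  rw [hrw]
  have hA : 0 ≤ ξ ⬝ᵥ (C *ᵥ ξ) := by simpa using hC.posSemidef.dotProduct_mulVec_nonneg ξ
  have hB : 0 ≤ p ⬝ᵥ (E *ᵥ p) := by simpa using hE.posSemidef.dotProduct_mulVec_nonneg p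
  have hC' : 0 ≤ η ⬝ᵥ (C *ᵥ η) := by simpa using hC.posSemidef.dotProduct_mulVec_nonneg η
  have hD' : 0 ≤ q ⬝ᵥ (E *ᵥ q) := by simpa using hE.posSemidef.dotProduct_mulVec_nonneg q
  have h1 := psd_cs hC.posSemidef ξ η
  have h2 := psd_cs hE.posSemidef p q
  have h3 := hD ξ q
  have h4 := hD η p
  set u := ξ ⬝ᵥ (C *ᵥ η); set z := p ⬝ᵥ (E *ᵥ q)
  set v := q ⬝ᵥ (D *ᵥ ξ); set w := p ⬝ᵥ (D *ᵥ η)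
  nlinarith [sq_nonneg (u + z + v + w), sq_nonneg (u - z), sq_nonneg (v - w),
    mul_nonneg hA hD', mul_nonneg hB hC', mul_nonneg hA hC', mul_nonneg hB hD']
end
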